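/- arXiv:2006.13705 — 2 statements merged into one kernel-verified Lean document; each statement's English description precedes it below -/
import Mathlib

section
/- Let A be an abelian group, 𝒯 a directed poset and X : 𝒯 → Set_* a diagram of pointed sets. If 𝒯 is ℵ₁-directed (every countable subset of 𝒯 has an upper bound in 𝒯), then the natural map ρ : (lim_𝒯 X)∧A → lim_𝒯(X∧A) is an isomorphism. -/
open CategoryTheory Finsupp

universe u v w

/-- The smash product `Y ∧ A` of a pointed set `(Y, y0)` with an abelian group `A`:
the group of finitely supported functions `Y →₀ A` vanishing at the basepoint,
i.e. `⊕_{y ∈ Y∖{y0}} A`. -/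
def Smash (Y : Type u) (y0 : Y) (A : Type v) [AddCommGroup A] :
    AddSubgroup (Y →₀ A) where
  carrier := {f | f y0 = 0}
  add_mem' := by
    intro a b ha hb
    simp only [Set.mem_setOf_eq, Finsupp.add_apply] at *
    rw [ha, hb, add_zero]
  zero_mem' := by simp
  neg_mem' := by
    intro a ha
    simp only [Set.mem_setOf_eq, Finsupp.neg_apply] at *
    rw [ha, neg_zero]

theorem mem_smash {Y : Type u} {y0 : Y} {A : Type v} [AddCommGroup A] {f : Y →₀ A} :
    f ∈ Smash Y y0 A ↔ f y0 = 0 := Iff.rfl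

/-- The pushforward homomorphism `g_* : Y∧A → Z∧A` induced by a (pointed) map
`g : Y → Z`: `(g_* f)(z) = ∑_{y : g y = z} f y` for `z ≠ z0`, and `(g_* f)(z0) = 0`. -/
noncomputable def smashMap {Y : Type u} {Z : Type v} (y0 : Y) (z0 : Z) (g : Y → Z)
    (A : Type w) [AddCommGroup A] :
    Smash Y y0 A →+ Smash Z z0 A where
  toFun f := ⟨(Finsupp.mapDomain g f.1).erase z0, Finsupp.erase_same⟩
  map_zero' := by
    apply Subtype.ext
    simp
  map_add' f₁ f₂ := by
    apply Subtype.ext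
    show (Finsupp.mapDomain g ((f₁ : Y →₀ A) + (f₂ : Y →₀ A))).erase z0 = _
    rw [Finsupp.mapDomain_add, Finsupp.erase_add]
    rfl

theorem smashMap_comp {Y : Type u} {Z : Type v} {W : Type w} (y0 : Y) (z0 : Z) (w0 : W)
    (g : Y → Z) (g' : Z → W) (hg' : g' z0 = w0)
    (A : Type*) [AddCommGroup A] (f : Smash Y y0 A) :
    smashMap z0 w0 g' A (smashMap y0 z0 g A f) = smashMap y0 w0 (g' ∘ g) A f := by
  classical
  apply Subtype.ext
  show (Finsupp.mapDomain g' ((Finsupp.mapDomain g f.1).erase z0)).erase w0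
      = (Finsupp.mapDomain (g' ∘ g) f.1).erase w0
  rw [Finsupp.mapDomain_comp]
  set h := Finsupp.mapDomain g f.1 with hh
  have key : Finsupp.mapDomain g' (h.erase z0)
      = Finsupp.mapDomain g' h - Finsupp.single w0 (h z0) := by
    have h1 : h.erase z0 = h - Finsupp.single z0 (h z0) := by
      ext a
      by_cases ha : a = z0
      · subst ha; simp
      · simp [Finsupp.erase_ne ha, Finsupp.single_apply, Ne.symm ha, ha]
    rw [h1]
    have h2 := map_sub (Finsupp.mapDomain.addMonoidHom g') h (Finsupp.single z0 (h z0))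
    simp only [Finsupp.mapDomain.addMonoidHom_apply] at h2
    rw [h2, Finsupp.mapDomain_single, hg']
  rw [key]
  ext a
  by_cases ha : a = w0
  · subst ha; simp
  · simp [Finsupp.erase_ne ha, Finsupp.single_apply, Ne.symm ha, ha]
/-- The inverse limit of a diagram of pointed sets, as a subset of the product. -/
def plim {D : Type u} [Category.{v} D] (F : D ⥤ Pointed.{w}) :
    Set (∀ d : D, (F.obj d).X) :=
  {x | ∀ ⦃d d' : D⦄ (u : d ⟶ d'), (F.map u).toFun (x d) = x d'}

/-- The basepoint of the inverse limit of a diagram of pointed sets. -/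
def plimPt {D : Type u} [Category.{v} D] (F : D ⥤ Pointed.{w}) : plim F :=
  ⟨fun d => (F.obj d).point, fun _ _ u => (F.map u).map_point⟩

/-- The inverse limit `lim_D (X ∧ A)` of the diagram of abelian groups obtained by
smashing a diagram of pointed sets with an abelian group `A`. -/
noncomputable def glim {D : Type u} [Category.{v} D] (F : D ⥤ Pointed.{w})
    (A : Type*) [AddCommGroup A] :
    AddSubgroup (∀ d : D, Smash (F.obj d).X (F.obj d).point A) where
  carrier := {h | ∀ ⦃d d' : D⦄ (u : d ⟶ d'),
      smashMap (F.obj d).point (F.obj d').point (F.map u).toFun A (h d) = h d'}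
  add_mem' := by
    intro a b ha hb d d' u
    rw [Pi.add_apply, map_add, ha u, hb u]
    rfl
  zero_mem' := by
    intro d d' u
    rw [Pi.zero_apply, map_zero]
    rfl
  neg_mem' := by
    intro a ha d d' u
    rw [Pi.neg_apply, map_neg, ha u]
    rfl

/-- The natural map `ρ : (lim_D X) ∧ A → lim_D (X ∧ A)`, whose component at `d`
is induced by the projection `lim_D X → X d`. -/
noncomputable def rho {D : Type u} [Category.{v} D] (F : D ⥤ Pointed.{w})
    (A : Type*) [AddCommGroup A] :
    Smash (plim F) (plimPt F) A →+ glim F A where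
  toFun f := ⟨fun d => smashMap (plimPt F) (F.obj d).point (fun x => x.1 d) A f, by
    intro d d' u
    rw [smashMap_comp (plimPt F) (F.obj d).point (F.obj d').point _ _ (F.map u).map_point A f]
    have : ((F.map u).toFun ∘ fun x : plim F => x.1 d) = fun x : plim F => x.1 d' := by
      funext x
      exact x.2 u
    rw [this]⟩
  map_zero' := by
    apply Subtype.ext
    funext d
    show smashMap (plimPt F) (F.obj d).point (fun x => x.1 d) A 0 = (0 : Smash _ _ A)
    exact map_zero _
  map_add' f₁ f₂ := by
    apply Subtype.ext
    funext d
    show smashMap (plimPt F) (F.obj d).point (fun x => x.1 d) A (f₁ + f₂)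
        = smashMap (plimPt F) (F.obj d).point (fun x => x.1 d) A f₁
          + smashMap (plimPt F) (F.obj d).point (fun x => x.1 d) A f₂
    exact map_add _ f₁ f₂

/-!
Injectivity only uses directedness: finitely many distinct points of `lim X` are already
separated by their images in a single `X t`.

For surjectivity, let `h ∈ lim (X ∧ A)`. The support sizes of the components `h t` grow with
`t`; were they unbounded, countably many indices carrying sizes beyond `0, 1, 2, …` would have a
common upper bound, which is absurd. Past an index `t₀` of maximal support size every transition
map restricts to a value-preserving bijection between supports, so each point of the support of
`h t₀` lifts uniquely to a point of `lim X`, and pushing `h t₀` forward along these lifts gives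
the preimage of `h`.
-/

open Opposite

section SmashMap

variable {Y : Type u} {Z : Type v} {y0 : Y} {z0 : Z} {g : Y → Z} {A : Type w} [AddCommGroup A]

theorem smashMap_coe (f : Smash Y y0 A) :
    (smashMap y0 z0 g A f : Z →₀ A) = (mapDomain g f.1).erase z0 := rfl

theorem smashMap_id (f : Smash Y y0 A) : smashMap y0 y0 id A f = f := by
  apply Subtype.ext
  rw [smashMap_coe, mapDomain_id, erase_of_notMem_support (notMem_support_iff.2 f.2)]

theorem smashMap_congr {g' : Y → Z} {f : Smash Y y0 A} (hgg' : Set.EqOn g g' f.1.support) :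
    smashMap y0 z0 g A f = smashMap y0 z0 g' A f :=
  Subtype.ext <| by rw [smashMap_coe, smashMap_coe, mapDomain_congr fun y hy => hgg' hy]

theorem smashMap_apply_of_injOn {f : Smash Y y0 A} (hg : g y0 = z0)
    (hinj : Set.InjOn g (insert y0 f.1.support)) {y : Y} (hy : y ∈ f.1.support) :
    (smashMap y0 z0 g A f).1 (g y) = f.1 y := by
  classical
  have hy0 : y ≠ y0 := by rintro rfl; exact mem_support_iff.1 hy f.2
  have hgy : g y ≠ z0 := fun e =>
    hy0 (hinj (Set.mem_insert_of_mem _ hy) (Set.mem_insert _ _) (e.trans hg.symm))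
  rw [smashMap_coe, erase_ne hgy]
  exact mapDomain_apply' _ _ (Set.subset_insert _ _) hinj (Set.mem_insert_of_mem _ hy)

theorem eq_zero_of_smashMap_eq_zero {f : Smash Y y0 A} (hg : g y0 = z0)
    (hinj : Set.InjOn g (insert y0 f.1.support)) (hf : smashMap y0 z0 g A f = 0) : f = 0 := by
  ext y
  by_contra hy
  have hmem : y ∈ f.1.support := mem_support_iff.2 hy
  exact hy (by rw [← smashMap_apply_of_injOn hg hinj hmem, hf]; rfl)

variable [DecidableEq Z]

theorem support_smashMap_subset (f : Smash Y y0 A) :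
    (smashMap y0 z0 g A f).1.support ⊆ f.1.support.image g := by
  intro z hz
  rw [mem_support_iff, smashMap_coe] at hz
  have hz0 : z ≠ z0 := by rintro rfl; exact hz erase_same
  rw [erase_ne hz0, ← mem_support_iff] at hz
  exact mapDomain_support hz

theorem card_support_smashMap_le (f : Smash Y y0 A) :
    (smashMap y0 z0 g A f).1.support.card ≤ f.1.support.card :=
  (Finset.card_le_card (support_smashMap_subset f)).trans Finset.card_image_le

theorem support_smashMap_eq_image_of_card_le {f : Smash Y y0 A}
    (hcard : f.1.support.card ≤ (smashMap y0 z0 g A f).1.support.card) :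
    (smashMap y0 z0 g A f).1.support = f.1.support.image g :=
  Finset.eq_of_subset_of_card_le (support_smashMap_subset f)
    (Finset.card_image_le.trans hcard)

theorem injOn_of_card_le_card_support_smashMap {f : Smash Y y0 A}
    (hcard : f.1.support.card ≤ (smashMap y0 z0 g A f).1.support.card) :
    Set.InjOn g f.1.support :=
  Finset.card_image_iff.1 <| le_antisymm Finset.card_image_le <|
    hcard.trans (support_smashMap_eq_image_of_card_le hcard ▸ le_rfl)

end SmashMap

section Diagram

variable {T : Type u} [PartialOrder T] (F : Tᵒᵖ ⥤ Pointed.{w})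

def tr {s t : T} (hst : s ≤ t) : (F.obj (op t)).X → (F.obj (op s)).X :=
  (F.map (homOfLE hst).op).toFun

variable {F}

theorem tr_refl (t : T) (x : (F.obj (op t)).X) : tr F le_rfl x = x := by
  rw [tr, show (homOfLE (le_refl t)).op = 𝟙 (op t) from rfl, F.map_id]
  rfl

theorem tr_tr {s t u : T} (hst : s ≤ t) (htu : t ≤ u) (x : (F.obj (op u)).X) :
    tr F hst (tr F htu x) = tr F (hst.trans htu) x := by
  rw [tr, tr, tr, show (homOfLE (hst.trans htu)).op = (homOfLE htu).op ≫ (homOfLE hst).op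
    from rfl, F.map_comp]
  rfl

theorem map_eq_tr {d d' : Tᵒᵖ} (u : d ⟶ d') (x : (F.obj d).X) :
    (F.map u).toFun x = tr F (leOfHom u.unop) x := by
  rw [show u = (homOfLE (leOfHom u.unop)).op from Subsingleton.elim _ _]
  rfl

theorem tr_of_mem_plim {x : ∀ d, (F.obj d).X} (hx : x ∈ plim F) {s t : T} (hst : s ≤ t) :
    tr F hst (x (op t)) = x (op s) :=
  hx (homOfLE hst).op

theorem eval_eq_of_le_of_mem_plim {x y : ∀ d, (F.obj d).X} (hx : x ∈ plim F) (hy : y ∈ plim F)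
    {s t : T} (hst : s ≤ t) (he : x (op t) = y (op t)) : x (op s) = y (op s) := by
  rw [← tr_of_mem_plim hx hst, ← tr_of_mem_plim hy hst, he]

variable [IsDirected T (· ≤ ·)]

theorem exists_injOn_eval_plim [Nonempty T] (S : Finset (plim F)) :
    ∃ t : T, Set.InjOn (fun x : plim F => x.1 (op t)) S := by
  classical
  have hsep (p : plim F × plim F) : ∃ t : T, p.1 ≠ p.2 → p.1.1 (op t) ≠ p.2.1 (op t) := by
    by_cases hp : p.1 = p.2
    · exact ⟨Classical.arbitrary T, fun h => absurd hp h⟩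
    · obtain ⟨d, hd⟩ := Function.ne_iff.1 fun e => hp (Subtype.ext e)
      exact ⟨d.unop, fun _ => hd⟩
  choose sep hsep using hsep
  obtain ⟨t, ht⟩ := Finset.exists_le ((S ×ˢ S).image sep)
  refine ⟨t, fun x hx y hy he => ?_⟩
  by_contra hxy
  exact hsep (x, y) hxy <| eval_eq_of_le_of_mem_plim x.2 y.2
    (ht _ (Finset.mem_image_of_mem sep (Finset.mem_product.2 ⟨hx, hy⟩))) he

theorem exists_mem_plim_of_compatible (t0 : T) (σ : ∀ t : T, t0 ≤ t → (F.obj (op t)).X)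
    (hσ : ∀ (s t : T) (hs : t0 ≤ s) (hst : s ≤ t),
      tr F hst (σ t (hs.trans hst)) = σ s hs) :
    ∃ x ∈ plim F, ∀ (t : T) (ht : t0 ≤ t), x (op t) = σ t ht := by
  have hσ' : ∀ (s t t' : T) (ht : s ≤ t) (ht' : s ≤ t') (h0t : t0 ≤ t) (h0t' : t0 ≤ t'),
      tr F ht (σ t h0t) = tr F ht' (σ t' h0t') := by
    intro s t t' ht ht' h0t h0t'
    obtain ⟨u, htu, ht'u⟩ := exists_ge_ge t t'
    rw [← hσ t u h0t htu, ← hσ t' u h0t' ht'u, tr_tr, tr_tr]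
  choose up hup h0up using fun d : Tᵒᵖ => exists_ge_ge d.unop t0
  refine ⟨fun d => tr F (hup d) (σ (up d) (h0up d)), fun d d' u => ?_, fun t ht => ?_⟩
  · rw [map_eq_tr, tr_tr]
    exact hσ' _ _ _ _ _ _ _
  · exact hσ t _ ht _

end Diagram

section Injective

variable {T : Type u} [PartialOrder T] [IsDirected T (· ≤ ·)] [Nonempty T]
  (F : Tᵒᵖ ⥤ Pointed.{w}) (A : Type*) [AddCommGroup A]

theorem rho_injective : Function.Injective (rho F A) := by
  classical
  refine (injective_iff_map_eq_zero (rho F A)).2 fun f hf => ?_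
  obtain ⟨t, ht⟩ := exists_injOn_eval_plim (F := F) (insert (plimPt F) f.1.support)
  refine eq_zero_of_smashMap_eq_zero (g := fun x : plim F => x.1 (op t)) rfl
    (by simpa using ht) ?_
  exact congrArg (fun h : glim F A => h.1 (op t)) hf

end Injective

def Aleph1Directed (T : Type u) [Preorder T] : Prop :=
  ∀ S : Set T, S.Countable → ∃ t : T, ∀ s ∈ S, s ≤ t

namespace Aleph1Directed

variable {T : Type u} [Preorder T]

theorem nonempty (hT : Aleph1Directed T) : Nonempty T :=
  let ⟨t, _⟩ := hT ∅ Set.countable_empty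
  ⟨t⟩

theorem isDirected (hT : Aleph1Directed T) : IsDirected T (· ≤ ·) :=
  ⟨fun a b =>
    let ⟨t, ht⟩ := hT {a, b} (Set.toFinite _).countable
    ⟨t, ht a (by simp), ht b (by simp)⟩⟩

theorem exists_forall_le_of_monotone (hT : Aleph1Directed T) {f : T → ℕ} (hf : Monotone f) :
    ∃ t0, ∀ t, f t ≤ f t0 := by
  have hbdd : BddAbove (Set.range f) := by
    by_contra hunb
    have hexceed : ∀ n : ℕ, ∃ t, n < f t := fun n => by
      obtain ⟨_, ⟨t, rfl⟩, hn⟩ := not_bddAbove_iff.1 hunb n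
      exact ⟨t, hn⟩
    choose g hg using hexceed
    obtain ⟨t1, ht1⟩ := hT (Set.range g) (Set.countable_range g)
    exact (hg (f t1)).not_ge (hf (ht1 _ ⟨_, rfl⟩))
  have := hT.nonempty
  obtain ⟨t0, ht0⟩ := Nat.sSup_mem (Set.range_nonempty f) hbdd
  exact ⟨t0, fun t => ht0 ▸ le_csSup hbdd ⟨t, rfl⟩⟩

end Aleph1Directed

section Surjective

variable {T : Type u} [PartialOrder T] {F : Tᵒᵖ ⥤ Pointed.{w}} {A : Type*} [AddCommGroup A]

namespace glim

def supportAt (h : glim F A) (t : T) : Finset (F.obj (op t)).X := (h.1 (op t)).1.support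

theorem smashMap_tr (h : glim F A) {s t : T} (hst : s ≤ t) :
    smashMap (F.obj (op t)).point (F.obj (op s)).point (tr F hst) A (h.1 (op t)) = h.1 (op s) :=
  h.2 (homOfLE hst).op

theorem monotone_card_supportAt (h : glim F A) : Monotone fun t => (supportAt h t).card := by
  classical
  intro s t hst
  dsimp only [supportAt]
  rw [← smashMap_tr h hst]
  exact card_support_smashMap_le _

theorem ext_of_forall_ge [IsDirected T (· ≤ ·)] {h h' : glim F A} (t0 : T)
    (hh' : ∀ t, t0 ≤ t → h.1 (op t) = h'.1 (op t)) : h = h' := by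
  apply Subtype.ext
  funext d
  induction d using Opposite.rec with | op d => ?_
  obtain ⟨u, hdu, h0u⟩ := exists_ge_ge d t0
  rw [← smashMap_tr h hdu, ← smashMap_tr h' hdu, hh' u h0u]

def IsStableAt (h : glim F A) (t0 : T) : Prop :=
  ∀ t, t0 ≤ t → (supportAt h t).card ≤ (supportAt h t0).card

namespace IsStableAt

variable {h : glim F A} {t0 s t : T}

theorem card_supportAt_le (ht0 : IsStableAt h t0) (hs : t0 ≤ s) (hst : s ≤ t) :
    (supportAt h t).card ≤ (smashMap (F.obj (op t)).point (F.obj (op s)).point (tr F hst) A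
      (h.1 (op t))).1.support.card := by
  rw [smashMap_tr h]
  exact (ht0 t (hs.trans hst)).trans (monotone_card_supportAt h hs)

theorem injOn_tr (ht0 : IsStableAt h t0) (hs : t0 ≤ s) (hst : s ≤ t) :
    Set.InjOn (tr F hst) (supportAt h t) := by
  classical
  exact injOn_of_card_le_card_support_smashMap (ht0.card_supportAt_le hs hst)

theorem supportAt_eq_image_tr [DecidableEq (F.obj (op s)).X] (ht0 : IsStableAt h t0) (hs : t0 ≤ s)
    (hst : s ≤ t) : supportAt h s = (supportAt h t).image (tr F hst) := by
  rw [supportAt, ← smashMap_tr h hst]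
  exact support_smashMap_eq_image_of_card_le (ht0.card_supportAt_le hs hst)

end IsStableAt

variable {h : glim F A} {t0 : T}

theorem exists_lift [IsDirected T (· ≤ ·)] (ht0 : IsStableAt h t0) {z : (F.obj (op t0)).X}
    (hz : z ∈ supportAt h t0) :
    ∃ x : plim F, x.1 (op t0) = z ∧ ∀ t, t0 ≤ t → x.1 (op t) ∈ supportAt h t := by
  classical
  have hpre : ∀ t (ht : t0 ≤ t), ∃ y ∈ supportAt h t, tr F ht y = z := fun t ht => by
    rw [ht0.supportAt_eq_image_tr le_rfl ht] at hz
    exact Finset.mem_image.1 hz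
  choose σ hσ hσz using hpre
  have hcompat : ∀ (s t : T) (hs : t0 ≤ s) (hst : s ≤ t),
      tr F hst (σ t (hs.trans hst)) = σ s hs := by
    intro s t hs hst
    refine ht0.injOn_tr le_rfl hs ?_ (hσ s hs) ?_
    · rw [ht0.supportAt_eq_image_tr hs hst]
      exact Finset.mem_image_of_mem _ (hσ t _)
    · rw [tr_tr, hσz, hσz]
  obtain ⟨x, hx, hxσ⟩ := exists_mem_plim_of_compatible t0 σ hcompat
  refine ⟨⟨x, hx⟩, (hxσ t0 le_rfl).trans ((tr_refl t0 _).symm.trans (hσz t0 le_rfl)),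
    fun t ht => ?_⟩
  show x (op t) ∈ _
  rw [hxσ t ht]
  exact hσ t ht

theorem exists_lift_map [IsDirected T (· ≤ ·)] (ht0 : IsStableAt h t0) :
    ∃ ℓ : (F.obj (op t0)).X → plim F, ℓ (F.obj (op t0)).point = plimPt F ∧
      ∀ z ∈ supportAt h t0,
        (ℓ z).1 (op t0) = z ∧ ∀ t, t0 ≤ t → (ℓ z).1 (op t) ∈ supportAt h t := by
  classical
  choose ℓ hℓ using fun z : supportAt h t0 => exists_lift ht0 z.2
  refine ⟨fun z => if hz : z ∈ supportAt h t0 then ℓ ⟨z, hz⟩ else plimPt F, ?_,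
    fun z hz => ?_⟩
  · exact dif_neg (notMem_support_iff.2 (h.1 (op t0)).2)
  · simpa only [dif_pos hz] using hℓ ⟨z, hz⟩

theorem rho_smashMap_lift (ht0 : IsStableAt h t0) {ℓ : (F.obj (op t0)).X → plim F}
    (hℓpt : ℓ (F.obj (op t0)).point = plimPt F)
    (hℓ : ∀ z ∈ supportAt h t0,
      (ℓ z).1 (op t0) = z ∧ ∀ t, t0 ≤ t → (ℓ z).1 (op t) ∈ supportAt h t)
    {t : T} (ht : t0 ≤ t) :
    (rho F A (smashMap _ (plimPt F) ℓ A (h.1 (op t0)))).1 (op t) = h.1 (op t) := by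
  classical
  set π : plim F → (F.obj (op t)).X := fun x => x.1 (op t)
  have hsection : Set.EqOn (π ∘ ℓ ∘ tr F ht) id (supportAt h t) := by
    intro y hy
    have hz : tr F ht y ∈ supportAt h t0 := by
      rw [ht0.supportAt_eq_image_tr le_rfl ht]
      exact Finset.mem_image_of_mem _ hy
    obtain ⟨hℓ0, hℓt⟩ := hℓ _ hz
    refine ht0.injOn_tr le_rfl ht (hℓt t ht) hy ?_
    rw [tr_of_mem_plim (ℓ _).2, hℓ0]
    rfl
  calc (rho F A (smashMap _ (plimPt F) ℓ A (h.1 (op t0)))).1 (op t)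
      = smashMap _ _ (π ∘ ℓ) A (h.1 (op t0)) := smashMap_comp _ _ _ _ _ rfl _ _
    _ = smashMap _ _ ((π ∘ ℓ) ∘ tr F ht) A (h.1 (op t)) := by
      rw [← smashMap_tr h ht, smashMap_comp _ _ _ _ _ (by simp [π, hℓpt, plimPt])]
    _ = smashMap _ _ id A (h.1 (op t)) := smashMap_congr hsection
    _ = h.1 (op t) := smashMap_id _

end glim

theorem rho_surjective (hT : Aleph1Directed T) : Function.Surjective (rho F A) := by
  have := hT.isDirected
  intro h
  obtain ⟨t0, ht0⟩ := hT.exists_forall_le_of_monotone (glim.monotone_card_supportAt h)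
  have hstable : glim.IsStableAt h t0 := fun t _ => ht0 t
  obtain ⟨ℓ, hℓpt, hℓ⟩ := glim.exists_lift_map hstable
  exact ⟨smashMap _ _ ℓ A (h.1 (op t0)),
    glim.ext_of_forall_ge t0 fun t ht => glim.rho_smashMap_lift hstable hℓpt hℓ ht⟩

end Surjective

theorem stmt10_general {T : Type u} [PartialOrder T]
    (F : Tᵒᵖ ⥤ Pointed.{w}) (A : Type*) [AddCommGroup A]
    (hT : ∀ S : Set T, S.Countable → ∃ t : T, ∀ s ∈ S, s ≤ t) :
    Function.Bijective (rho F A) :=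
  have := Aleph1Directed.isDirected hT
  have := Aleph1Directed.nonempty hT
  ⟨rho_injective F A, rho_surjective hT⟩

/-- Let `A` be an abelian group, `T` a directed poset and `F : Tᵒᵖ ⥤ Set_*` a diagram
of pointed sets.  If `T` is `ℵ₁`-directed (every countable subset of `T` has an upper
bound in `T`), then the natural map `ρ : (lim_T X) ∧ A → lim_T (X ∧ A)` is an
isomorphism. -/
theorem stmt10 {T : Type u} [PartialOrder T] [IsDirected T (· ≤ ·)] [Nonempty T]
    (F : Tᵒᵖ ⥤ Pointed.{w}) (A : Type*) [AddCommGroup A]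
    (hT : ∀ S : Set T, S.Countable → ∃ t : T, ∀ s ∈ S, s ≤ t) :
    Function.Bijective (rho F A) :=
  stmt10_general F A hT
end

section
/- Let A be an abelian group, 𝒯 a directed poset and X : 𝒯 → Set_* a diagram of pointed sets such that X(t) is finite for every t ∈ 𝒯. If A is cotorsion, then G(X,A) = lim_𝒯(X∧A) and the cokernel H(X,A) of the natural map ρ are cotorsion. -/
open CategoryTheory Finsupp

universe u v w

/-- `C` is cotorsion, i.e. `Ext¹_ℤ(ℚ, C) = 0`.  Applying `Hom(-, C)` to the standard
free presentation `0 → ⊕_{n ∈ ℕ} ℤ → ⊕_{n ∈ ℕ} ℤ → ℚ → 0` (where the first map sends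
`e_n ↦ e_n - (n+1)·e_{n+1}`) identifies `Ext¹_ℤ(ℚ, C)` with the cokernel of
`C^ℕ → C^ℕ, (x_n) ↦ (x_n - (n+1)x_{n+1})`; hence `Ext¹_ℤ(ℚ, C) = 0` iff every system
of equations `x_n - (n+1)·x_{n+1} = a_n` (`n ∈ ℕ`) is solvable in `C`. -/
def Cotorsion (C : Type*) [AddCommGroup C] : Prop :=
  ∀ a : ℕ → C, ∃ x : ℕ → C, ∀ n : ℕ, x n - (n + 1) • x (n + 1) = a n

/-! Cotorsion means that `x ↦ (xₙ - (n+1)•xₙ₊₁)` is surjective on `C^ℕ`. Its kernel is divisible,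
hence an injective abelian group, so for cotorsion `A` this map has an *additive* section `s`.
Because every `X(t)` is finite, a sequence of elements of `G(X,A)` is the same as one element of
`G(X,A^ℕ)`, and `G(X,-)` is functorial in additive maps; applying `G(X,s)` to it solves the
system in `G(X,A)`. Finally `H(X,A)` is a quotient of `G(X,A)`. -/

section CotorsionMap

variable {C : Type*} [AddCommGroup C]

def cotorsionMap (C : Type*) [AddCommGroup C] : (ℕ → C) →+ (ℕ → C) where
  toFun x n := x n - (n + 1) • x (n + 1)
  map_zero' := by ext; simp
  map_add' x y := by ext; simp only [Pi.add_apply, smul_add]; abel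

theorem cotorsionMap_apply (x : ℕ → C) (n : ℕ) :
    cotorsionMap C x n = x n - (n + 1) • x (n + 1) := rfl

theorem cotorsion_iff_surjective_cotorsionMap :
    Cotorsion C ↔ Function.Surjective (cotorsionMap C) :=
  forall_congr' fun _ => exists_congr fun _ => funext_iff.symm

theorem cotorsionMap_eq_zero_iff {y : ℕ → C} :
    cotorsionMap C y = 0 ↔ ∀ n, y n = (n + 1) • y (n + 1) := by
  simp only [funext_iff, cotorsionMap_apply, Pi.zero_apply, sub_eq_zero]

theorem eq_factorial_mul_choose_smul_of_cotorsionMap_eq_zero {y : ℕ → C}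
    (hy : cotorsionMap C y = 0) (n m : ℕ) :
    y n = (m.factorial * (n + m).choose m) • y (n + m) := by
  induction m with
  | zero => simp
  | succ m ih =>
    have hchoose := Nat.add_one_mul_choose_eq (n + m) m
    rw [ih, cotorsionMap_eq_zero_iff.mp hy (n + m), smul_smul, ← add_assoc,
      Nat.factorial_succ]
    congr 1
    linear_combination m.factorial * hchoose

theorem exists_nsmul_eq_of_cotorsionMap_eq_zero {y : ℕ → C} (hy : cotorsionMap C y = 0)
    (m : ℕ) : ∃ z, cotorsionMap C z = 0 ∧ (m + 1) • z = y := by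
  refine ⟨fun n => (m.factorial * (n + m + 1).choose (m + 1)) • y (n + m + 1), ?_, ?_⟩
  · rw [cotorsionMap_eq_zero_iff]
    intro n
    have hchoose := Nat.choose_mul_succ_eq (n + m + 1) (m + 1)
    rw [show n + m + 1 + 1 - (m + 1) = n + 1 by omega] at hchoose
    rw [cotorsionMap_eq_zero_iff.mp hy (n + m + 1), smul_smul, smul_smul,
      show n + 1 + m + 1 = n + m + 1 + 1 by omega]
    congr 1
    linear_combination m.factorial * hchoose
  · ext n
    rw [Pi.smul_apply, smul_smul,
      eq_factorial_mul_choose_smul_of_cotorsionMap_eq_zero hy n (m + 1), Nat.factorial_succ,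
      ← add_assoc]
    congr 1
    ring

theorem Cotorsion.exists_rightInverse_cotorsionMap (hC : Cotorsion C) :
    ∃ s : (ℕ → C) →+ (ℕ → C), ∀ a, cotorsionMap C (s a) = a := by
  let g := (cotorsionMap C).toIntLinearMap
  let K := LinearMap.ker g
  let : DivisibleBy K ℕ := divisibleByOfSMulRightSurj _ _ fun {m} hm ⟨y, hy⟩ => by
    obtain ⟨k, rfl⟩ := Nat.exists_eq_succ_of_ne_zero hm
    obtain ⟨z, hz, hzy⟩ := exists_nsmul_eq_of_cotorsionMap_eq_zero (C := C) hy k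
    exact ⟨⟨z, hz⟩, Subtype.ext hzy⟩
  let : DivisibleBy K ℤ := AddGroup.divisibleByIntOfDivisibleByNat _
  obtain ⟨r, hr⟩ := (Module.Baer.of_divisible K).extension_property K.subtype
    K.injective_subtype LinearMap.id
  have hsurj : Function.Surjective g := cotorsion_iff_surjective_cotorsionMap.mp hC
  have hexact := LinearMap.exact_subtype_ker_map g
  let s := (hexact.splitSurjectiveEquiv K.injective_subtype).symm
    (hexact.splitInjectiveEquiv hsurj ⟨r, hr⟩)
  exact ⟨s.1.toAddMonoidHom, LinearMap.congr_fun s.2⟩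

theorem Cotorsion.of_surjective {C' : Type*} [AddCommGroup C'] (f : C →+ C')
    (hf : Function.Surjective f) (hC : Cotorsion C) : Cotorsion C' := by
  intro a
  choose b hb using fun n => hf (a n)
  obtain ⟨x, hx⟩ := hC b
  exact ⟨fun n => f (x n), fun n => by rw [← map_nsmul, ← map_sub, hx, hb]⟩

end CotorsionMap

section SmashMapRange

variable {Y : Type*} {A : Type*} {B : Type*} [AddCommGroup A] [AddCommGroup B]

noncomputable def smashMapRange (y0 : Y) (φ : A →+ B) :
    Smash Y y0 A →+ Smash Y y0 B :=
  ((Finsupp.mapRange.addMonoidHom φ).comp (Smash Y y0 A).subtype).codRestrict _ fun f => by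
    simp [mem_smash, mem_smash.mp f.2]

@[simp]
theorem smashMapRange_apply (y0 : Y) (φ : A →+ B) (f : Smash Y y0 A) (y : Y) :
    (smashMapRange y0 φ f : Y →₀ B) y = φ ((f : Y →₀ A) y) := rfl

theorem smashMap_smashMapRange {Z : Type*} (y0 : Y) (z0 : Z) (g : Y → Z)
    (φ : A →+ B) (f : Smash Y y0 A) :
    smashMap y0 z0 g B (smashMapRange y0 φ f) = smashMapRange z0 φ (smashMap y0 z0 g A f) := by
  apply Subtype.ext
  show ((f : Y →₀ A).mapRange φ φ.map_zero |>.mapDomain g).erase z0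
    = ((f : Y →₀ A).mapDomain g |>.erase z0).mapRange φ φ.map_zero
  rw [Finsupp.mapDomain_mapRange _ _ _ _ φ.map_add]
  ext z
  by_cases hz : z = z0 <;> simp [hz, Finsupp.erase_ne]

theorem smash_ext_of_smashMapRange_eval {y0 : Y} {ι : Type*} {g₁ g₂ : Smash Y y0 (ι → A)}
    (h : ∀ i, smashMapRange y0 (Pi.evalAddMonoidHom (fun _ => A) i) g₁
      = smashMapRange y0 (Pi.evalAddMonoidHom (fun _ => A) i) g₂) : g₁ = g₂ := by
  ext y i
  simpa using congr($(h i).1 y)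

theorem exists_smashMapRange_eval_eq [Finite Y] (y0 : Y) {ι : Type*}
    (f : ι → Smash Y y0 A) :
    ∃ g : Smash Y y0 (ι → A),
      ∀ i, smashMapRange y0 (Pi.evalAddMonoidHom (fun _ => A) i) g = f i :=
  ⟨⟨Finsupp.equivFunOnFinite.symm fun y i => (f i : Y →₀ A) y, by
      ext i; simpa using mem_smash.mp (f i).2⟩,
    fun i => by ext y; simp⟩

end SmashMapRange

section GlimMap

variable {D : Type u} [Category.{v} D] (F : D ⥤ Pointed.{w})
variable {A : Type*} {B : Type*} [AddCommGroup A] [AddCommGroup B]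

noncomputable def glimMap (φ : A →+ B) : glim F A →+ glim F B :=
  ((AddMonoidHom.pi fun d => (smashMapRange (F.obj d).point φ).comp
      (Pi.evalAddMonoidHom _ d)).comp (glim F A).subtype).codRestrict _ fun h _ _ u =>
    (smashMap_smashMapRange _ _ _ φ _).trans (congrArg _ (h.2 u))

@[simp]
theorem glimMap_apply (φ : A →+ B) (h : glim F A) (d : D) (y : (F.obj d).X) :
    ((glimMap F φ h : ∀ d, Smash (F.obj d).X (F.obj d).point B) d : (F.obj d).X →₀ B) y
      = φ ((h.1 d : (F.obj d).X →₀ A) y) := rfl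

variable {F} in
theorem glim_ext {h₁ h₂ : glim F A}
    (h : ∀ d y, (h₁.1 d : (F.obj d).X →₀ A) y = (h₂.1 d : (F.obj d).X →₀ A) y) : h₁ = h₂ := by
  ext d y
  exact h d y

theorem exists_glimMap_eval_eq (hfin : ∀ d, Finite (F.obj d).X) {ι : Type*}
    (a : ι → glim F A) :
    ∃ b : glim F (ι → A), ∀ i, glimMap F (Pi.evalAddMonoidHom (fun _ => A) i) b = a i := by
  choose b hb using fun d => exists_smashMapRange_eval_eq (F.obj d).point fun i => (a i).1 d
  refine ⟨⟨b, fun d d' u => smash_ext_of_smashMapRange_eval fun i => ?_⟩, fun i => ?_⟩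
  · rw [← smashMap_smashMapRange, hb, hb]
    exact (a i).2 u
  · ext d : 2
    exact hb d i

theorem cotorsion_glim (hfin : ∀ d, Finite (F.obj d).X) (hA : Cotorsion A) :
    Cotorsion (glim F A) := by
  obtain ⟨s, hs⟩ := hA.exists_rightInverse_cotorsionMap
  intro a
  obtain ⟨b, hb⟩ := exists_glimMap_eval_eq F hfin a
  refine ⟨fun n => glimMap F (Pi.evalAddMonoidHom _ n) (glimMap F s b), fun n => ?_⟩
  rw [← hb n]
  refine glim_ext fun d y => ?_
  simpa [cotorsionMap_apply] using congrFun (hs ((b.1 d : (F.obj d).X →₀ ℕ → A) y)) n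

end GlimMap

theorem stmt12_general {T : Type u} [PartialOrder T]
    (F : Tᵒᵖ ⥤ Pointed.{w}) (hfin : ∀ d : Tᵒᵖ, Finite (F.obj d).X)
    (A : Type*) [AddCommGroup A] (hA : Cotorsion A) :
    Cotorsion (glim F A) ∧ Cotorsion (↥(glim F A) ⧸ (rho F A).range) :=
  have hG := cotorsion_glim F hfin hA
  ⟨hG, hG.of_surjective (QuotientAddGroup.mk' _) (QuotientAddGroup.mk'_surjective _)⟩

/-- Let `A` be an abelian group, `T` a directed poset and `F : Tᵒᵖ ⥤ Set_*` a diagram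
of *finite* pointed sets.  If `A` is cotorsion, then `G(X,A) = lim_T(X∧A)` and the
cokernel `H(X,A)` of the natural map `ρ` are cotorsion. -/
theorem stmt12 {T : Type u} [PartialOrder T] [IsDirected T (· ≤ ·)] [Nonempty T]
    (F : Tᵒᵖ ⥤ Pointed.{w}) (hfin : ∀ d : Tᵒᵖ, Finite (F.obj d).X)
    (A : Type*) [AddCommGroup A] (hA : Cotorsion A) :
    Cotorsion (glim F A) ∧ Cotorsion (↥(glim F A) ⧸ (rho F A).range) :=
  stmt12_general F hfin A hA
end
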